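/- arXiv:2402.01370 — 4 statements merged into one kernel-verified Lean document; each statement's English description precedes it below -/
import Mathlib

section
/- Fix a positive integer N, thresholds η ∈ [0,1] and β ∈ [0,1], and let k_β be a natural number satisfying C(k_β; N, η) ≤ β. Let p ∈ [0,1] and let μ_p denote the N-fold product of the Bernoulli(p) measure on {0,1}. If μ_p of the event { (x_1,…,x_N) : ∑_{i=1}^N x_i ≤ k_β } is strictly greater than β, then p ≤ η. -/
/-!
Sorting configurations by their number of ones shows that the event `#{i | x i} ≤ k` has
`μ_p`-probability `C(k; N, p)`. Differentiating `C(k; N, ·)` term by term, the derivatives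
telescope to `-(k+1) (N choose k+1) p^k (1-p)^(N-k-1) ≤ 0`, so `C(k; N, ·)` is antitone on
`[0, 1]`. Hence `p > η` would give `μ_p(event) = C(k; N, p) ≤ C(k; N, η) ≤ β`.
-/

set_option linter.deprecated false

open MeasureTheory

/-- The binomial cumulative distribution function
`C(k; N, p) = ∑_{ℓ=0}^{k} (N choose ℓ) p^ℓ (1-p)^{N-ℓ}`. -/
noncomputable def binomCDF (N : ℕ) (p : ℝ) (k : ℕ) : ℝ :=
  ∑ ℓ ∈ Finset.range (k + 1), (N.choose ℓ : ℝ) * p ^ ℓ * (1 - p) ^ (N - ℓ)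

/-- The `N`-fold product of the Bernoulli(`p`) measure on `{0,1}` (here `Bool`). -/
noncomputable def bernoulliPi (N : ℕ) (p : ℝ) (hp : p ∈ Set.Icc (0 : ℝ) 1) :
    Measure (Fin N → Bool) :=
  Measure.pi fun _ =>
    (PMF.bernoulli (Real.toNNReal p) (Real.toNNReal_le_one.mpr hp.2)).toMeasure

open Finset

noncomputable def binomTermDeriv (N : ℕ) (p : ℝ) (j : ℕ) : ℝ :=
  (N.choose j : ℝ) * j * p ^ (j - 1) * (1 - p) ^ (N - j)

lemma hasDerivAt_binomTerm (N ℓ : ℕ) (p : ℝ) :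
    HasDerivAt (fun q : ℝ => (N.choose ℓ : ℝ) * q ^ ℓ * (1 - q) ^ (N - ℓ))
      (binomTermDeriv N p ℓ - binomTermDeriv N p (ℓ + 1)) p := by
  have hpow : HasDerivAt (fun q : ℝ => (1 - q) ^ (N - ℓ))
      ((N - ℓ : ℕ) * (1 - p) ^ (N - ℓ - 1) * (-1)) p :=
    ((hasDerivAt_id p).const_sub 1).fun_pow (N - ℓ)
  refine (((hasDerivAt_pow ℓ p).const_mul (N.choose ℓ : ℝ)).mul hpow).congr_deriv ?_
  have hchoose : (N.choose (ℓ + 1) : ℝ) * (ℓ + 1) = N.choose ℓ * (N - ℓ : ℕ) := by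
    exact_mod_cast Nat.choose_succ_right_eq N ℓ
  rw [binomTermDeriv, binomTermDeriv, Nat.add_sub_cancel, ← Nat.sub_sub]
  push_cast
  linear_combination (p ^ ℓ * (1 - p) ^ (N - ℓ - 1)) * hchoose

lemma hasDerivAt_binomCDF (N k : ℕ) (p : ℝ) :
    HasDerivAt (fun q : ℝ => binomCDF N q k) (-binomTermDeriv N p (k + 1)) p := by
  have h := HasDerivAt.fun_sum fun ℓ (_ : ℓ ∈ range (k + 1)) => hasDerivAt_binomTerm N ℓ p
  have h0 : binomTermDeriv N p 0 = 0 := by simp [binomTermDeriv]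
  rwa [sum_range_sub', h0, zero_sub] at h

lemma binomTermDeriv_nonneg (N j : ℕ) {p : ℝ} (hp : p ∈ Set.Icc (0 : ℝ) 1) :
    0 ≤ binomTermDeriv N p j := by
  have h0p : 0 ≤ p := hp.1
  have h1p : 0 ≤ 1 - p := sub_nonneg.2 hp.2
  unfold binomTermDeriv
  positivity

lemma binomCDF_antitoneOn (N k : ℕ) : AntitoneOn (fun p => binomCDF N p k) (Set.Icc 0 1) :=
  antitoneOn_of_hasDerivWithinAt_nonpos (convex_Icc 0 1)
    (fun q _ => (hasDerivAt_binomCDF N k q).continuousAt.continuousWithinAt)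
    (fun q _ => (hasDerivAt_binomCDF N k q).hasDerivWithinAt)
    fun _ hq => neg_nonpos.2 (binomTermDeriv_nonneg N _ (interior_subset hq))

lemma binomCDF_eq_sum_range (N k : ℕ) (p : ℝ) :
    binomCDF N p k =
      ∑ m ∈ range (N + 1), N.choose m • if m ≤ k then p ^ m * (1 - p) ^ (N - m) else 0 := by
  simp only [binomCDF, smul_ite, smul_zero, sum_ite, sum_const_zero, add_zero, nsmul_eq_mul,
    mul_assoc]
  refine (sum_subset ?_ ?_).symm
  · intro m hm
    simp only [mem_filter, mem_range] at hm ⊢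
    omega
  · intro m hm hmN
    simp only [mem_filter, mem_range, not_and, not_le] at hm hmN
    rw [Nat.choose_eq_zero_of_lt (by omega), Nat.cast_zero, zero_mul]

section BernoulliProduct

variable {ι : Type*} [Fintype ι] [DecidableEq ι]

lemma sum_card_le_eq_binomCDF (p : ℝ) (k : ℕ) :
    ∑ x : ι → Bool with #{i | x i} ≤ k, p ^ #{i | x i} * (1 - p) ^ (Fintype.card ι - #{i | x i})
      = binomCDF (Fintype.card ι) p k := by
  rw [binomCDF_eq_sum_range, ← card_univ, ← sum_powerset_apply_card, powerset_univ, sum_filter]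
  exact sum_nbij' (fun x => ({i | x i} : Finset ι)) (fun s i => i ∈ s) (by simp) (by simp)
    (fun x _ => by ext; simp) (fun s _ => by ext; simp) (fun x _ => rfl)

lemma prod_ite_bool {M : Type*} [CommMonoid M] (x : ι → Bool) (a b : M) :
    ∏ i, (if x i then a else b) = a ^ #{i | x i} * b ^ (Fintype.card ι - #{i | x i}) := by
  rw [prod_ite, prod_const, prod_const, filter_not, card_sdiff_of_subset (filter_subset _ _),
    card_univ]

lemma PMF.toMeasure_bernoulli_toNNReal_singleton {p : ℝ} (hp : p ∈ Set.Icc (0 : ℝ) 1)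
    (b : Bool) :
    (PMF.bernoulli p.toNNReal (Real.toNNReal_le_one.mpr hp.2)).toMeasure {b}
      = ENNReal.ofReal (if b then p else 1 - p) := by
  rw [PMF.toMeasure_apply_singleton _ b (measurableSet_singleton b), PMF.bernoulli_apply]
  cases b
  · change 1 - ENNReal.ofReal p = ENNReal.ofReal (1 - p)
    rw [ENNReal.ofReal_sub _ hp.1, ENNReal.ofReal_one]
  · rfl

lemma measure_pi_bernoulli_singleton {p : ℝ} (hp : p ∈ Set.Icc (0 : ℝ) 1) (x : ι → Bool) :
    Measure.pi (fun _ : ι => (PMF.bernoulli p.toNNReal (Real.toNNReal_le_one.mpr hp.2)).toMeasure)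
        {x} = ENNReal.ofReal (p ^ #{i | x i} * (1 - p) ^ (Fintype.card ι - #{i | x i})) := by
  have h0p : 0 ≤ p := hp.1
  have h1p : 0 ≤ 1 - p := sub_nonneg.2 hp.2
  rw [← Set.univ_pi_singleton, Measure.pi_pi]
  simp_rw [PMF.toMeasure_bernoulli_toNNReal_singleton hp]
  rw [← ENNReal.ofReal_prod_of_nonneg fun i _ => by split_ifs <;> assumption, prod_ite_bool]

lemma measure_pi_bernoulli_card_le {p : ℝ} (hp : p ∈ Set.Icc (0 : ℝ) 1) (k : ℕ) :
    Measure.pi (fun _ : ι => (PMF.bernoulli p.toNNReal (Real.toNNReal_le_one.mpr hp.2)).toMeasure)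
        {x | Nat.card {i // x i = true} ≤ k} = ENNReal.ofReal (binomCDF (Fintype.card ι) p k) := by
  have h0p : 0 ≤ p := hp.1
  have h1p : 0 ≤ 1 - p := sub_nonneg.2 hp.2
  have hevent : {x : ι → Bool | Nat.card {i // x i = true} ≤ k}
      = ↑({x | #{i | x i} ≤ k} : Finset (ι → Bool)) := by
    ext x
    simp [Nat.card_eq_fintype_card, Fintype.card_subtype]
  rw [hevent, ← sum_measure_singleton, ← sum_card_le_eq_binomCDF,
    ENNReal.ofReal_sum_of_nonneg fun x _ => by positivity]
  simp_rw [measure_pi_bernoulli_singleton hp]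

end BernoulliProduct

theorem stmt_1_general (N : ℕ) (η β : ℝ)
    (hη : η ∈ Set.Icc (0 : ℝ) 1)
    (kβ : ℕ) (hkβ : binomCDF N η kβ ≤ β)
    (p : ℝ) (hp : p ∈ Set.Icc (0 : ℝ) 1)
    (h : ENNReal.ofReal β <
      bernoulliPi N p hp {x | Nat.card {i : Fin N // x i = true} ≤ kβ}) :
    p ≤ η := by
  have hlaw : bernoulliPi N p hp {x | Nat.card {i : Fin N // x i = true} ≤ kβ}
      = ENNReal.ofReal (binomCDF N p kβ) := by
    rw [bernoulliPi, measure_pi_bernoulli_card_le hp, Fintype.card_fin]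
  rw [hlaw, ENNReal.ofReal_lt_ofReal_iff'] at h
  by_contra! hηp
  have hmono : binomCDF N p kβ ≤ binomCDF N η kβ := binomCDF_antitoneOn N kβ hη hp hηp.le
  linarith [h.1]

theorem stmt_1 (N : ℕ) (hN : 0 < N) (η β : ℝ)
    (hη : η ∈ Set.Icc (0 : ℝ) 1) (hβ : β ∈ Set.Icc (0 : ℝ) 1)
    (kβ : ℕ) (hkβ : binomCDF N η kβ ≤ β)
    (p : ℝ) (hp : p ∈ Set.Icc (0 : ℝ) 1)
    (h : ENNReal.ofReal β <
      bernoulliPi N p hp {x | Nat.card {i : Fin N // x i = true} ≤ kβ}) :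
    p ≤ η :=
  stmt_1_general N η β hη kβ hkβ p hp h
end

section
/- Let (Ω, μ) be a probability space, let h₂ : Ω → ℝ be measurable, let η ∈ [0,1], β ∈ [0,1], and let N be a positive integer. Assume there exists t₀ ∈ ℝ with μ{ω : h₂(ω) > t₀} = η, and let k_β be a natural number satisfying C(k_β; N, η) ≤ β. Then the N-fold product measure μ^N of the set of samples (δ_1,…,δ_N) ∈ Ω^N for which there exists some t ∈ ℝ with μ{ω : h₂(ω) > t} > η and #{i : h₂(δ_i) > t} ≤ k_β is at most β. Equivalently, with probability at least 1 − β over an i.i.d. sample of size N from μ, every threshold t whose true violation probability μ{h₂ > t} exceeds η has sample violation count strictly greater than k_β. -/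
open MeasureTheory

theorem stmt_5 {Ω : Type*} [MeasurableSpace Ω] (μ : Measure Ω) [IsProbabilityMeasure μ]
    (h₂ : Ω → ℝ) (hmeas : Measurable h₂)
    (η β : ℝ) (hη : η ∈ Set.Icc (0 : ℝ) 1) (hβ : β ∈ Set.Icc (0 : ℝ) 1)
    (N : ℕ) (hN : 0 < N)
    (ht₀ : ∃ t₀ : ℝ, μ {ω | h₂ ω > t₀} = ENNReal.ofReal η)
    (kβ : ℕ) (hkβ : binomCDF N η kβ ≤ β) :
    (Measure.pi fun _ : Fin N => μ)
        {δ : Fin N → Ω | ∃ t : ℝ,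
          ENNReal.ofReal η < μ {ω | h₂ ω > t} ∧
          Nat.card {i : Fin N // h₂ (δ i) > t} ≤ kβ} ≤
      ENNReal.ofReal β := by
  classical
  obtain ⟨t₀, ht₀⟩ := ht₀
  obtain ⟨hη0, hη1⟩ := hη
  set A : Set Ω := {ω | h₂ ω > t₀} with hAdef
  have hAmeas : MeasurableSet A := by
    have : A = h₂ ⁻¹' Set.Ioi t₀ := rfl
    rw [this]; exact hmeas measurableSet_Ioi
  set E : Set (Fin N → Ω) :=
    {δ | (Finset.univ.filter (fun i => h₂ (δ i) > t₀)).card ≤ kβ} with hEdef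
  have hsub : {δ : Fin N → Ω | ∃ t : ℝ,
      ENNReal.ofReal η < μ {ω | h₂ ω > t} ∧
      Nat.card {i : Fin N // h₂ (δ i) > t} ≤ kβ} ⊆ E := by
    rintro δ ⟨t, hμt, hcard⟩
    have ht : t < t₀ := by
      by_contra h
      push_neg at h
      have hle : μ {ω | h₂ ω > t} ≤ μ A := by
        apply measure_mono
        intro ω hω
        exact lt_of_le_of_lt h hω
      rw [ht₀] at hle
      exact absurd hμt (not_lt.2 hle)
    have hcard' : Nat.card {i : Fin N // h₂ (δ i) > t}
        = (Finset.univ.filter (fun i => h₂ (δ i) > t)).card := by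
      simp [Nat.card_eq_fintype_card, Fintype.card_subtype]
    have hmono : (Finset.univ.filter (fun i => h₂ (δ i) > t₀)).card
        ≤ (Finset.univ.filter (fun i => h₂ (δ i) > t)).card := by
      apply Finset.card_le_card
      intro i hi
      simp only [Finset.mem_filter, Finset.mem_univ, true_and] at hi ⊢
      exact lt_trans ht hi
    exact le_trans hmono (hcard' ▸ hcard)
  refine le_trans (measure_mono hsub) ?_
  -- cover E by a finite union
  have hcover : E ⊆ ⋃ S ∈ Finset.univ.powerset.filter (fun S : Finset (Fin N) => S.card ≤ kβ),
      Set.univ.pi (fun i => if i ∈ S then A else Aᶜ) := by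
    intro δ hδ
    simp only [Set.mem_iUnion]
    refine ⟨Finset.univ.filter (fun i => h₂ (δ i) > t₀), ?_, ?_⟩
    · simp only [Finset.mem_filter, Finset.mem_powerset]
      exact ⟨Finset.subset_univ _, hδ⟩
    · intro i _
      by_cases h : h₂ (δ i) > t₀ <;> simp [h, hAdef]
  refine le_trans (measure_mono hcover) ?_
  refine le_trans (measure_biUnion_finset_le _ _) ?_
  have hμc : μ Aᶜ = ENNReal.ofReal (1 - η) := by
    rw [measure_compl hAmeas (measure_ne_top μ A), ht₀, measure_univ,
      ENNReal.ofReal_sub _ hη0, ENNReal.ofReal_one]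
  have hval : ∀ S : Finset (Fin N),
      (Measure.pi fun _ : Fin N => μ) (Set.univ.pi (fun i => if i ∈ S then A else Aᶜ))
        = ENNReal.ofReal (η ^ S.card * (1 - η) ^ (N - S.card)) := by
    intro S
    rw [Measure.pi_pi]
    have : ∀ i : Fin N, μ (if i ∈ S then A else Aᶜ)
        = if i ∈ S then ENNReal.ofReal η else ENNReal.ofReal (1 - η) := by
      intro i; by_cases h : i ∈ S <;> simp [h, ht₀, hμc]
    simp_rw [this]
    rw [Finset.prod_ite, Finset.prod_const, Finset.prod_const,
      ENNReal.ofReal_mul (by positivity), ENNReal.ofReal_pow hη0,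
      ENNReal.ofReal_pow (by linarith)]
    congr 2
    · rw [Finset.filter_mem_eq_inter, Finset.univ_inter]
    · rw [Finset.filter_not, Finset.filter_mem_eq_inter, Finset.univ_inter,
        Finset.card_sdiff_of_subset (Finset.subset_univ S), Finset.card_univ, Fintype.card_fin]
  simp_rw [hval]
  -- now sum over S grouped by card
  have hsum : ∑ S ∈ Finset.univ.powerset.filter (fun S : Finset (Fin N) => S.card ≤ kβ),
      ENNReal.ofReal (η ^ S.card * (1 - η) ^ (N - S.card))
      ≤ ENNReal.ofReal (binomCDF N η kβ) := by
    have hset : Finset.univ.powerset.filter (fun S : Finset (Fin N) => S.card ≤ kβ)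
        = (Finset.range (kβ + 1)).biUnion (fun ℓ => Finset.powersetCard ℓ Finset.univ) := by
      ext S
      simp [Finset.mem_powersetCard, Nat.lt_succ_iff]
    rw [hset, Finset.sum_biUnion]
    · rw [binomCDF, ENNReal.ofReal_sum_of_nonneg (fun ℓ _ => mul_nonneg (mul_nonneg (Nat.cast_nonneg _) (pow_nonneg hη0 _)) (pow_nonneg (by linarith) _))]
      apply le_of_eq
      apply Finset.sum_congr rfl
      intro ℓ hℓ
      have : ∀ S ∈ Finset.powersetCard ℓ (Finset.univ : Finset (Fin N)),
          ENNReal.ofReal (η ^ S.card * (1 - η) ^ (N - S.card))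
            = ENNReal.ofReal (η ^ ℓ * (1 - η) ^ (N - ℓ)) := by
        intro S hS
        rw [(Finset.mem_powersetCard.1 hS).2]
      rw [Finset.sum_congr rfl this, Finset.sum_const, Finset.card_powersetCard,
        Finset.card_univ, Fintype.card_fin, nsmul_eq_mul,
        mul_assoc, ENNReal.ofReal_mul (Nat.cast_nonneg _), ENNReal.ofReal_natCast]
    · intro a _ b _ hab
      apply Finset.disjoint_left.2
      intro S hSa hSb
      exact hab ((Finset.mem_powersetCard.1 hSa).2.symm.trans (Finset.mem_powersetCard.1 hSb).2)
  exact le_trans hsum (ENNReal.ofReal_le_ofReal hkβ)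
end

section
/- Let n, m, H ≥ 1, set d = n + 1, let N be an integer with N ≥ d, let r : {1,…,m} × {1,…,H} → [0,∞) be given radii, and let μ be a Borel probability measure on the space of configurations ω : {1,…,m} × {1,…,H} → ℝⁿ. Define R_N = E_{(ω_1,…,ω_N) ∼ μ^N} [ E_{(σ_1,…,σ_N)} [ sup_{q : {1,…,H} → ℝⁿ} (1/N) ∑_{i=1}^N σ_i · max_{o,t} 1[‖q(t) − ω_i(o,t)‖ < r(o,t)] ] ], where σ_1, …, σ_N are i.i.d. uniform on {−1, +1} and independent of the ω_i. Then R_N ≤ m·H·√( d·log(e·N/d) / (2N) ), where e is Euler's number. -/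
/-!
For a fixed sample `ω₁, …, ω_N` the collision class realises only finitely many patterns
`{i | robot q collides in configuration ωᵢ}`. Each pattern is a union, over the `m·H` pairs
`(o, t)`, of traces of translates of one ball on the points `ωᵢ(o, t)`. By Radon's theorem,
translates of a ball in `ℝⁿ` shatter no `n + 2` points, so by Sauer–Shelah each pair contributes
at most `∑_{k ≤ d} (N choose k) ≤ (eN/d)^d` traces and the class has at most `(eN/d)^(d·m·H)`
patterns. Massart's finite-class lemma (soft-max, Jensen and `cosh x ≤ exp (x²/2)`, applied to
the patterns centred at `1/2`) bounds the empirical Rademacher average by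
`√(m·H·d·log(eN/d)/(2N)) ≤ m·H·√(d·log(eN/d)/(2N))`, uniformly in the sample.
-/

open MeasureTheory Finset Real Module

section Rademacher

variable {ι : Type*} [Fintype ι]

def rademacherSum (σ : ι → Bool) (a : ι → ℝ) : ℝ := ∑ i, (if σ i then 1 else -1) * a i

lemma rademacherSum_sub (σ : ι → Bool) (a c : ι → ℝ) :
    rademacherSum σ (a - c) = rademacherSum σ a - rademacherSum σ c := by
  simp only [rademacherSum, Pi.sub_apply, mul_sub, sum_sub_distrib]

variable [DecidableEq ι]

lemma sum_rademacherSum_eq_zero (a : ι → ℝ) : ∑ σ : ι → Bool, rademacherSum σ a = 0 := by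
  have hflip (σ : ι → Bool) : rademacherSum (fun i => !σ i) a = -rademacherSum σ a := by
    simp only [rademacherSum, ← sum_neg_distrib]
    congr with i
    by_cases h : σ i <;> simp [h]
  have := Fintype.sum_equiv (Equiv.piCongrRight fun _ : ι => Equiv.boolNot)
    (fun σ => rademacherSum (fun i => !σ i) a) (rademacherSum · a) fun _ => rfl
  rw [sum_congr rfl fun σ _ => hflip σ, sum_neg_distrib] at this
  linarith

lemma sum_exp_mul_rademacherSum_le (a : ι → ℝ) (t : ℝ) :
    ∑ σ : ι → Bool, exp (t * rademacherSum σ a) ≤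
      2 ^ Fintype.card ι * exp (t ^ 2 * (∑ i, a i ^ 2) / 2) := by
  calc ∑ σ : ι → Bool, exp (t * rademacherSum σ a)
      = ∏ i, ∑ b : Bool, exp (t * ((if b then 1 else -1) * a i)) := by
        simp only [Fintype.prod_sum, rademacherSum, mul_sum, exp_sum]
    _ = ∏ i, 2 * cosh (t * a i) := by
        congr with i
        simp only [Fintype.sum_bool, cosh_eq, if_true, Bool.false_eq_true, if_false]
        ring_nf
    _ ≤ ∏ i, 2 * exp ((t * a i) ^ 2 / 2) := by
        gcongr with i
        exact cosh_le_exp_half_sq _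
    _ = 2 ^ Fintype.card ι * exp (t ^ 2 * (∑ i, a i ^ 2) / 2) := by
        simp only [prod_mul_distrib, prod_const, card_univ, ← exp_sum, mul_sum, sum_div]
        ring_nf

lemma mul_sum_sup'_rademacherSum_le (A : Finset (ι → ℝ)) (hA : A.Nonempty) {R t : ℝ}
    (hR : ∀ a ∈ A, ∑ i, a i ^ 2 ≤ R ^ 2) (ht : 0 < t) :
    t * ((∑ σ : ι → Bool, A.sup' hA (rademacherSum σ)) / 2 ^ Fintype.card ι) ≤
      log #A + t ^ 2 * R ^ 2 / 2 := by
  set w : ℝ := (2 ^ Fintype.card ι)⁻¹ with hw_def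
  have hw : ∑ _σ : ι → Bool, w = 1 := by
    simp [w]
  have hA0 : (0 : ℝ) < #A := by exact_mod_cast hA.card_pos
  have hsoftmax (σ : ι → Bool) :
      exp (t * A.sup' hA (rademacherSum σ)) ≤ ∑ a ∈ A, exp (t * rademacherSum σ a) := by
    obtain ⟨a, ha, hmax⟩ := A.exists_mem_eq_sup' hA (rademacherSum σ)
    rw [hmax]
    exact single_le_sum (f := fun a => exp (t * rademacherSum σ a)) (fun _ _ => (exp_pos _).le) ha
  have hjensen : exp (t * ((∑ σ : ι → Bool, A.sup' hA (rademacherSum σ)) / 2 ^ Fintype.card ι)) ≤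
      w * ∑ σ : ι → Bool, exp (t * A.sup' hA (rademacherSum σ)) := by
    have := convexOn_exp.map_sum_le (t := univ) (w := fun _ => w)
      (p := fun σ : ι → Bool => t * A.sup' hA (rademacherSum σ)) (fun _ _ => by positivity) hw
      (fun _ _ => Set.mem_univ _)
    simp only [smul_eq_mul, ← mul_sum] at this
    rwa [hw_def, div_eq_inv_mul, mul_left_comm]
  have hhoeffding : w * ∑ σ : ι → Bool, ∑ a ∈ A, exp (t * rademacherSum σ a) ≤
      #A * exp (t ^ 2 * R ^ 2 / 2) := by
    rw [sum_comm]
    calc w * ∑ a ∈ A, ∑ σ : ι → Bool, exp (t * rademacherSum σ a)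
        ≤ w * ∑ _a ∈ A, 2 ^ Fintype.card ι * exp (t ^ 2 * R ^ 2 / 2) := by
          gcongr with a ha
          refine (sum_exp_mul_rademacherSum_le a t).trans ?_
          gcongr
          linarith [hR a ha]
      _ = #A * exp (t ^ 2 * R ^ 2 / 2) := by
          simp only [sum_const, nsmul_eq_mul, w]
          field_simp
  rw [← exp_le_exp, exp_add, exp_log hA0]
  calc _ ≤ _ := hjensen
    _ ≤ w * ∑ σ : ι → Bool, ∑ a ∈ A, exp (t * rademacherSum σ a) := by
        gcongr with σ
        exact hsoftmax σ
    _ ≤ _ := hhoeffding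

theorem sum_sup'_rademacherSum_le (A : Finset (ι → ℝ)) (hA : A.Nonempty) {R : ℝ} (hR₀ : 0 < R)
    (hR : ∀ a ∈ A, ∑ i, a i ^ 2 ≤ R ^ 2) :
    (∑ σ : ι → Bool, A.sup' hA (rademacherSum σ)) / 2 ^ Fintype.card ι ≤ R * √(2 * log #A) := by
  obtain hcard | hcard := (Nat.succ_le_of_lt hA.card_pos).eq_or_lt
  · obtain ⟨a, rfl⟩ := card_eq_one.1 hcard.symm
    simp only [sup'_singleton, sum_rademacherSum_eq_zero, zero_div]
    positivity
  · set L := log #A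
    have hL : 0 < L := log_pos (by exact_mod_cast hcard)
    -- the optimal inverse temperature in the bound `log #A / t + t R² / 2`
    set t := √(2 * L) / R
    have ht : 0 < t := by positivity
    have htR : t ^ 2 * R ^ 2 / 2 = L := by
      simp only [t, div_pow, sq_sqrt (by positivity : (0 : ℝ) ≤ 2 * L)]
      field_simp
    have key := mul_sum_sup'_rademacherSum_le A hA hR ht
    rw [htR] at key
    calc _ ≤ 2 * L / t := by rw [le_div_iff₀ ht]; linarith
      _ = R * √(2 * L) := by
        simp only [t]
        field_simp
        rw [sq_sqrt (by positivity)]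

theorem sum_sup'_rademacherSum_indicator_le [Nonempty ι] (𝒜 : Finset (Finset ι))
    (h𝒜 : 𝒜.Nonempty) :
    (∑ σ : ι → Bool, 𝒜.sup' h𝒜 fun s => rademacherSum σ fun i => if i ∈ s then 1 else 0) /
        2 ^ Fintype.card ι ≤ √(Fintype.card ι * log #𝒜 / 2) := by
  set c : ι → ℝ := fun _ => 1 / 2
  set centred : Finset ι → ι → ℝ := fun s => (fun i => if i ∈ s then 1 else 0) - c
  have hinj : Function.Injective centred := by
    intro s s' h
    ext i
    have := congr_fun h i
    simp only [centred, Pi.sub_apply, sub_left_inj] at this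
    by_cases hs : i ∈ s <;> by_cases hs' : i ∈ s' <;> simp [hs, hs'] at this ⊢
  have hR (a) (ha : a ∈ 𝒜.image centred) :
      ∑ i, a i ^ 2 ≤ (√(Fintype.card ι) / 2) ^ 2 := by
    obtain ⟨s, -, rfl⟩ := mem_image.1 ha
    have hsq (i : ι) : centred s i ^ 2 = 1 / 4 := by
      by_cases hi : i ∈ s <;> norm_num [centred, c, hi]
    simp only [hsq, sum_const, card_univ, nsmul_eq_mul, div_pow, sq_sqrt (Nat.cast_nonneg _)]
    linarith
  have hshift (σ : ι → Bool) :
      (𝒜.sup' h𝒜 fun s => rademacherSum σ fun i => if i ∈ s then 1 else 0) =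
        (𝒜.image centred).sup' (h𝒜.image _) (rademacherSum σ) + rademacherSum σ c := by
    simp only [sup'_image, sup'_add, Function.comp_def, centred, rademacherSum_sub, sub_add_cancel]
  calc _ = (∑ σ : ι → Bool, (𝒜.image centred).sup' (h𝒜.image _) (rademacherSum σ)) /
          2 ^ Fintype.card ι := by
        simp only [hshift, sum_add_distrib, sum_rademacherSum_eq_zero, add_zero]
    _ ≤ √(Fintype.card ι) / 2 * √(2 * log #(𝒜.image centred)) :=
        sum_sup'_rademacherSum_le _ _ (by positivity) hR
    _ = √(Fintype.card ι * log #𝒜 / 2) := by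
        rw [card_image_of_injective _ hinj, ← sqrt_sq (by positivity : 0 ≤ √(Fintype.card ι) / 2),
          ← sqrt_mul (sq_nonneg _), div_pow, sq_sqrt (Nat.cast_nonneg _)]
        ring_nf

end Rademacher

theorem sum_Iic_choose_le_exp_mul_div_pow {d N : ℕ} (hd : 0 < d) (hdN : d ≤ N) :
    ((∑ k ∈ Iic d, N.choose k : ℕ) : ℝ) ≤ (exp 1 * N / d) ^ d := by
  have hN : (0 : ℝ) < N := by exact_mod_cast hd.trans_le hdN
  set x : ℝ := d / N with hx
  have hx0 : 0 < x := by positivity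
  have hx1 : x ≤ 1 := div_le_one_of_le₀ (by exact_mod_cast hdN) hN.le
  have key : ((∑ k ∈ Iic d, N.choose k : ℕ) : ℝ) * x ^ d ≤ exp d := by
    calc ((∑ k ∈ Iic d, N.choose k : ℕ) : ℝ) * x ^ d
        ≤ ∑ k ∈ Iic d, (N.choose k : ℝ) * x ^ k := by
          push_cast
          rw [sum_mul]
          refine sum_le_sum fun k hk => mul_le_mul_of_nonneg_left ?_ (by positivity)
          exact pow_le_pow_of_le_one hx0.le hx1 (mem_Iic.1 hk)
      _ ≤ ∑ k ∈ range (N + 1), (N.choose k : ℝ) * x ^ k :=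
          sum_le_sum_of_subset_of_nonneg
            (fun k hk => mem_range.2 (Nat.lt_succ_of_le ((mem_Iic.1 hk).trans hdN)))
            fun _ _ _ => by positivity
      _ = (1 + x) ^ N := by
          rw [add_comm 1 x, add_pow]
          simp only [one_pow, mul_one, mul_comm]
      _ ≤ exp x ^ N := by
          gcongr
          linarith [add_one_le_exp x]
      _ = exp d := by
          rw [← exp_nat_mul, hx]
          field_simp
  calc _ ≤ exp d / x ^ d := by rw [le_div_iff₀ (by positivity)]; exact key
    _ = (exp 1 * N / d) ^ d := by
        rw [← exp_one_pow, ← div_pow, hx]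
        field_simp

section Balls

variable {ι E : Type*} [Fintype ι] [NormedAddCommGroup E]

open Classical in
noncomputable def ballTraces (x : ι → E) (ρ : ℝ) : Finset (Finset ι) :=
  {t | ∃ c : E, ∀ i, i ∈ t ↔ dist c (x i) < ρ}

lemma mem_ballTraces {x : ι → E} {ρ : ℝ} {t : Finset ι} :
    t ∈ ballTraces x ρ ↔ ∃ c : E, ∀ i, i ∈ t ↔ dist c (x i) < ρ := by
  simp [ballTraces]

open Classical in
noncomputable def unionBallTraces {J : Type*} (x : ι → J → E) (r : J → ℝ) : Finset (Finset ι) :=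
  {t | ∃ c : J → E, ∀ i, i ∈ t ↔ ∃ j, dist (c j) (x i j) < r j}

lemma mem_unionBallTraces {J : Type*} {x : ι → J → E} {r : J → ℝ} {t : Finset ι} :
    t ∈ unionBallTraces x r ↔ ∃ c : J → E, ∀ i, i ∈ t ↔ ∃ j, dist (c j) (x i j) < r j := by
  simp [unionBallTraces]

lemma Finset.Shatters.exists_ball [DecidableEq ι] {x : ι → E} {ρ : ℝ} {s : Finset ι}
    (hs : (ballTraces x ρ).Shatters s) (I : Set s) :
    ∃ c : E, ∀ j : s, j ∈ I ↔ dist c (x j) < ρ := by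
  classical
  obtain ⟨u, hu, hsu⟩ := hs (filter_subset (fun i => ∃ h : i ∈ s, ⟨i, h⟩ ∈ I) s)
  obtain ⟨c, hc⟩ := mem_ballTraces.1 hu
  refine ⟨c, fun j => ?_⟩
  have := congr_arg (j.1 ∈ ·) hsu
  simp only [mem_inter, mem_filter, j.2, true_and, hc, exists_true_left] at this
  exact Iff.of_eq this.symm

variable [InnerProductSpace ℝ E]

lemma convex_setOf_dist_lt_dist (a b : E) : Convex ℝ {y | dist y a < dist y b} := by
  have hset : {y | dist y a < dist y b} = {y | inner ℝ (b - a) y < (‖b‖ ^ 2 - ‖a‖ ^ 2) / 2} := by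
    ext y
    simp only [Set.mem_ofPred_eq, dist_eq_norm, ← sq_lt_sq₀ (norm_nonneg _) (norm_nonneg _),
      norm_sub_sq_real, inner_sub_left, real_inner_comm y]
    constructor <;> intro h <;> linarith
  rw [hset]
  exact convex_halfSpace_lt (innerₛₗ ℝ (b - a)).isLinear _

theorem card_le_finrank_add_one_of_shatters_ballTraces [DecidableEq ι] [FiniteDimensional ℝ E]
    {x : ι → E} {ρ : ℝ} {s : Finset ι} (hs : (ballTraces x ρ).Shatters s) :
    #s ≤ finrank ℝ E + 1 := by
  by_contra! hlt
  have hdep : ¬ AffineIndependent ℝ fun j : s => x j := fun h => by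
    have := h.card_le_finrank_succ.trans (Nat.add_le_add_right (Submodule.finrank_le _) 1)
    rw [Fintype.card_coe] at this
    omega
  obtain ⟨I, p, hpI, hpIc⟩ := Convex.radon_partition hdep
  obtain ⟨c₁, hc₁⟩ := hs.exists_ball I
  obtain ⟨c₂, hc₂⟩ := hs.exists_ball Iᶜ
  -- a Radon point would lie strictly on both sides of the perpendicular bisector of `c₁ c₂`
  have h₁ : convexHull ℝ ((fun j : s => x j) '' I) ⊆ {y | dist y c₁ < dist y c₂} := by
    refine convexHull_min ?_ (convex_setOf_dist_lt_dist _ _)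
    rintro _ ⟨j, hj, rfl⟩
    have hin := (hc₁ j).1 hj
    have hout := mt (hc₂ j).2 (not_not_intro hj)
    simp only [Set.mem_ofPred_eq, dist_comm (x j)]
    linarith
  have h₂ : convexHull ℝ ((fun j : s => x j) '' Iᶜ) ⊆ {y | dist y c₂ < dist y c₁} := by
    refine convexHull_min ?_ (convex_setOf_dist_lt_dist _ _)
    rintro _ ⟨j, hj, rfl⟩
    have hin := (hc₂ j).1 hj
    have hout := mt (hc₁ j).2 hj
    simp only [Set.mem_ofPred_eq, dist_comm (x j)]
    linarith
  exact lt_asymm (show dist p c₁ < dist p c₂ from h₁ hpI) (h₂ hpIc)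

theorem vcDim_ballTraces_le [DecidableEq ι] [FiniteDimensional ℝ E] (x : ι → E) (ρ : ℝ) :
    (ballTraces x ρ).vcDim ≤ finrank ℝ E + 1 :=
  Finset.sup_le fun _ hs => card_le_finrank_add_one_of_shatters_ballTraces (mem_shatterer.1 hs)

theorem card_ballTraces_le [FiniteDimensional ℝ E] (x : ι → E) (ρ : ℝ) :
    #(ballTraces x ρ) ≤ ∑ k ∈ Iic (finrank ℝ E + 1), (Fintype.card ι).choose k := by
  classical
  exact (card_le_card_shatterer _).trans <| card_shatterer_le_sum_vcDim.trans <|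
    sum_le_sum_of_subset (Iic_subset_Iic.2 (vcDim_ballTraces_le x ρ))

theorem card_unionBallTraces_le [FiniteDimensional ℝ E] {J : Type*} [Fintype J]
    (x : ι → J → E) (r : J → ℝ) :
    #(unionBallTraces x r) ≤
      (∑ k ∈ Iic (finrank ℝ E + 1), (Fintype.card ι).choose k) ^ Fintype.card J := by
  classical
  have hsub : unionBallTraces x r ⊆
      (Fintype.piFinset fun j => ballTraces (fun i => x i j) (r j)).image
        fun T => univ.biUnion T := by
    intro t ht
    obtain ⟨c, hc⟩ := mem_unionBallTraces.1 ht
    refine mem_image.2 ⟨fun j => {i | dist (c j) (x i j) < r j}, ?_, ?_⟩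
    · exact Fintype.mem_piFinset.2 fun j => mem_ballTraces.2 ⟨c j, fun i => by simp⟩
    · ext i
      simp [hc]
  calc #(unionBallTraces x r) ≤ ∏ j, #(ballTraces (fun i => x i j) (r j)) :=
        (card_le_card hsub).trans (card_image_le.trans (Fintype.card_piFinset _).le)
    _ ≤ ∏ _j : J, ∑ k ∈ Iic (finrank ℝ E + 1), (Fintype.card ι).choose k :=
        prod_le_prod' fun j _ => card_ballTraces_le _ _
    _ = _ := by rw [prod_const, card_univ]

theorem log_card_unionBallTraces_le [FiniteDimensional ℝ E] {J : Type*} [Fintype J]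
    (x : ι → J → E) (r : J → ℝ) (hd : finrank ℝ E + 1 ≤ Fintype.card ι) :
    log #(unionBallTraces x r) ≤ Fintype.card J *
      ((finrank ℝ E + 1) * log (exp 1 * Fintype.card ι / (finrank ℝ E + 1))) := by
  classical
  set d := finrank ℝ E + 1
  have hne : (unionBallTraces x r).Nonempty :=
    ⟨({i | ∃ j, dist 0 (x i j) < r j} : Finset ι), mem_unionBallTraces.2 ⟨0, fun i => by simp⟩⟩
  have hcard : (#(unionBallTraces x r) : ℝ) ≤
      ((exp 1 * Fintype.card ι / d) ^ d) ^ Fintype.card J := by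
    calc (#(unionBallTraces x r) : ℝ)
        ≤ ((∑ k ∈ Iic d, (Fintype.card ι).choose k : ℕ) : ℝ) ^ Fintype.card J := by
          exact_mod_cast card_unionBallTraces_le x r
      _ ≤ _ := by
          gcongr
          exact sum_Iic_choose_le_exp_mul_div_pow (Nat.succ_pos _) hd
  calc _ ≤ log (((exp 1 * Fintype.card ι / d) ^ d) ^ Fintype.card J) :=
        log_le_log (by exact_mod_cast hne.card_pos) hcard
    _ = _ := by
        rw [← pow_mul, log_pow]
        push_cast [d]
        ring

end Balls

lemma integral_le_of_forall_le {α : Type*} [MeasurableSpace α] {μ : Measure α}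
    [IsProbabilityMeasure μ] {f : α → ℝ} {C : ℝ} (hC : 0 ≤ C) (hf : ∀ x, f x ≤ C) :
    ∫ x, f x ∂μ ≤ C := by
  by_cases hint : Integrable f μ
  · simpa using integral_mono hint (integrable_const C) hf
  · rw [integral_undef hint]
    exact hC

lemma sqrt_natCast_le_self (k : ℕ) : √(k : ℝ) ≤ k := by
  rcases Nat.eq_zero_or_pos k with rfl | hk
  · simp
  · exact sqrt_le_self_iff.2 (Or.inr (by exact_mod_cast hk))

lemma one_div_mul_sqrt_le {N : ℕ} (hN : 0 < N) (k : ℕ) (X : ℝ) :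
    (1 / N : ℝ) * √(N * (k * X) / 2) ≤ k * √(X / (2 * N)) := by
  have hsqrt : √(N * (k * X) / 2) = N * (√k * √(X / (2 * N))) := by
    rw [← sqrt_mul (Nat.cast_nonneg _), show (N * (k * X) / 2 : ℝ) = N ^ 2 * (k * (X / (2 * N))) by
      field_simp, sqrt_mul (sq_nonneg _), sqrt_sq (Nat.cast_nonneg _)]
  rw [hsqrt, ← mul_assoc, one_div_mul_cancel (by positivity), one_mul]
  gcongr
  exact sqrt_natCast_le_self k

theorem sum_iSup_collision_le {E : Type*} [NormedAddCommGroup E] [InnerProductSpace ℝ E]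
    [FiniteDimensional ℝ E] {m H N : ℕ} (hN : finrank ℝ E + 1 ≤ N)
    (r : Fin m × Fin H → ℝ) (ω : Fin N → Fin m × Fin H → E) :
    (∑ σ : Fin N → Bool, ⨆ q : Fin H → E, (1 / N : ℝ) * ∑ i : Fin N,
        (if σ i then (1 : ℝ) else -1) *
          (if ∃ ot : Fin m × Fin H, ‖q ot.2 - ω i ot‖ < r ot then (1 : ℝ) else 0)) / 2 ^ N ≤
      m * H * √((finrank ℝ E + 1) * log (exp 1 * N / (finrank ℝ E + 1)) / (2 * N)) := by
  classical
  have hN₀ : 0 < N := by omega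
  have : Nonempty (Fin N) := ⟨⟨0, hN₀⟩⟩
  set 𝒞 := unionBallTraces ω r
  have htrace (q : Fin H → E) :
      ({i | ∃ ot : Fin m × Fin H, ‖q ot.2 - ω i ot‖ < r ot} : Finset (Fin N)) ∈ 𝒞 :=
    mem_unionBallTraces.2 ⟨fun ot => q ot.2, fun i => by simp [dist_eq_norm]⟩
  have h𝒞 : 𝒞.Nonempty := ⟨_, htrace 0⟩
  have hsup (σ : Fin N → Bool) :
      (⨆ q : Fin H → E, (1 / N : ℝ) * ∑ i : Fin N, (if σ i then (1 : ℝ) else -1) *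
          (if ∃ ot : Fin m × Fin H, ‖q ot.2 - ω i ot‖ < r ot then (1 : ℝ) else 0)) ≤
        (1 / N : ℝ) * 𝒞.sup' h𝒞 fun s => rademacherSum σ fun i => if i ∈ s then 1 else 0 := by
    refine ciSup_le fun q => mul_le_mul_of_nonneg_left ?_ (by positivity)
    convert le_sup' (fun s => rademacherSum σ fun i => if i ∈ s then 1 else 0) (htrace q)
    simp [rademacherSum]
  have hlog := log_card_unionBallTraces_le ω r (by rwa [Fintype.card_fin])
  rw [Fintype.card_fin, Fintype.card_prod, Fintype.card_fin, Fintype.card_fin] at hlog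
  calc _ ≤ (∑ σ : Fin N → Bool, (1 / N : ℝ) *
          𝒞.sup' h𝒞 fun s => rademacherSum σ fun i => if i ∈ s then 1 else 0) / 2 ^ N := by
        gcongr with σ
        exact hsup σ
    _ = (1 / N : ℝ) * ((∑ σ : Fin N → Bool,
          𝒞.sup' h𝒞 fun s => rademacherSum σ fun i => if i ∈ s then 1 else 0) /
            2 ^ Fintype.card (Fin N)) := by
        rw [← mul_sum, Fintype.card_fin, mul_div_assoc]
    _ ≤ (1 / N : ℝ) * √(N * log #𝒞 / 2) := by
        simpa only [Fintype.card_fin] using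
          mul_le_mul_of_nonneg_left (sum_sup'_rademacherSum_indicator_le 𝒞 h𝒞) (by positivity)
    _ ≤ (1 / N : ℝ) * √(N * ((m * H : ℕ) *
          ((finrank ℝ E + 1) * log (exp 1 * N / (finrank ℝ E + 1)))) / 2) := by
        gcongr
    _ ≤ _ := by
        simpa only [Nat.cast_mul] using one_div_mul_sqrt_le hN₀ (m * H) _

theorem stmt_10_general (n m H : ℕ)
    (N : ℕ) (hN : n + 1 ≤ N)
    (r : Fin m × Fin H → ℝ)
    (μ : Measure (Fin m × Fin H → EuclideanSpace ℝ (Fin n))) [IsProbabilityMeasure μ] :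
    (∫ ωs : Fin N → (Fin m × Fin H → EuclideanSpace ℝ (Fin n)),
        (∑ σ : Fin N → Bool,
            ⨆ q : Fin H → EuclideanSpace ℝ (Fin n),
              (1 / N : ℝ) *
                ∑ i : Fin N,
                  (if σ i then (1 : ℝ) else -1) *
                    (if ∃ ot : Fin m × Fin H, ‖q ot.2 - ωs i ot‖ < r ot then (1 : ℝ) else 0)) /
          2 ^ N ∂(Measure.pi fun _ : Fin N => μ)) ≤
      m * H * Real.sqrt ((n + 1) * Real.log (Real.exp 1 * N / (n + 1)) / (2 * N)) := by
  refine integral_le_of_forall_le (by positivity) fun ωs => ?_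
  simpa only [finrank_euclideanSpace_fin] using
    sum_iSup_collision_le (E := EuclideanSpace ℝ (Fin n)) (by rwa [finrank_euclideanSpace_fin]) r ωs

theorem stmt_10 (n m H : ℕ) (hn : 1 ≤ n) (hm : 1 ≤ m) (hH : 1 ≤ H)
    (N : ℕ) (hN : n + 1 ≤ N)
    (r : Fin m × Fin H → ℝ) (hr : ∀ ot, 0 ≤ r ot)
    (μ : Measure (Fin m × Fin H → EuclideanSpace ℝ (Fin n))) [IsProbabilityMeasure μ] :
    (∫ ωs : Fin N → (Fin m × Fin H → EuclideanSpace ℝ (Fin n)),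
        (∑ σ : Fin N → Bool,
            ⨆ q : Fin H → EuclideanSpace ℝ (Fin n),
              (1 / N : ℝ) *
                ∑ i : Fin N,
                  (if σ i then (1 : ℝ) else -1) *
                    (if ∃ ot : Fin m × Fin H, ‖q ot.2 - ωs i ot‖ < r ot then (1 : ℝ) else 0)) /
          2 ^ N ∂(Measure.pi fun _ : Fin N => μ)) ≤
      m * H * Real.sqrt ((n + 1) * Real.log (Real.exp 1 * N / (n + 1)) / (2 * N)) :=
  stmt_10_general n m H N hN r μ
end

section
/- Let d ≥ 1 and N ≥ d be integers, let m, H ≥ 1 be integers, let β ∈ (0,1], and let η ≥ 0. Set A = √(2·d·log(e·N/d)/N), B = √(log(1/β)/(2N)) and C = √(log(m·H/β)/(2N)), where e is Euler's number. Then for every natural number k: if k/N + A + C ≤ η/(m·H), then k/N + m·H·A + B ≤ η. Consequently, max{k ∈ ℕ : k/N + A + C ≤ η/(m·H)} ≤ max{k ∈ ℕ : k/N + m·H·A + B ≤ η} whenever the first set is nonempty. -/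
theorem stmt_12 (d N m H : ℕ) (hd : 1 ≤ d) (hN : d ≤ N) (hm : 1 ≤ m) (hH : 1 ≤ H)
    (β η : ℝ) (hβ : β ∈ Set.Ioc (0 : ℝ) 1) (hη : 0 ≤ η)
    (A B C : ℝ)
    (hA : A = Real.sqrt (2 * d * Real.log (Real.exp 1 * N / d) / N))
    (hB : B = Real.sqrt (Real.log (1 / β) / (2 * N)))
    (hC : C = Real.sqrt (Real.log (m * H / β) / (2 * N))) :
    (∀ k : ℕ, (k : ℝ) / N + A + C ≤ η / (m * H) → (k : ℝ) / N + m * H * A + B ≤ η) ∧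
      ({k : ℕ | (k : ℝ) / N + A + C ≤ η / (m * H)}.Nonempty →
        sSup {k : ℕ | (k : ℝ) / N + A + C ≤ η / (m * H)} ≤
          sSup {k : ℕ | (k : ℝ) / N + m * H * A + B ≤ η}) := by
  obtain ⟨hβ0, hβ1⟩ := hβ
  have hN0 : (0 : ℝ) < N := by
    have : 1 ≤ N := le_trans hd hN
    exact_mod_cast Nat.pos_of_ne_zero (by omega)
  have hmH1 : (1 : ℝ) ≤ (m : ℝ) * H := by
    have : (1 : ℕ) ≤ m * H := Nat.one_le_iff_ne_zero.mpr (by positivity)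
    exact_mod_cast this
  have hmH0 : (0 : ℝ) < (m : ℝ) * H := lt_of_lt_of_le one_pos hmH1
  have hA0 : 0 ≤ A := hA ▸ Real.sqrt_nonneg _
  have hB0 : 0 ≤ B := hB ▸ Real.sqrt_nonneg _
  have hC0 : 0 ≤ C := hC ▸ Real.sqrt_nonneg _
  have hBC : B ≤ C := by
    rw [hB, hC]
    apply Real.sqrt_le_sqrt
    apply div_le_div_of_nonneg_right _ (by positivity)
    apply Real.log_le_log (by positivity)
    gcongr
  have key : ∀ k : ℕ, (k : ℝ) / N + A + C ≤ η / (m * H) →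
      (k : ℝ) / N + m * H * A + B ≤ η := by
    intro k hk
    have hx0 : (0 : ℝ) ≤ (k : ℝ) / N := by positivity
    have h1 : (m : ℝ) * H * ((k : ℝ) / N + A + C) ≤ η := by
      have := mul_le_mul_of_nonneg_left hk (le_of_lt hmH0)
      rwa [mul_div_cancel₀ _ (ne_of_gt hmH0)] at this
    nlinarith [mul_le_mul_of_nonneg_right (sub_nonneg.mpr hmH1) hx0,
      mul_le_mul_of_nonneg_right (sub_nonneg.mpr hmH1) hC0]
  refine ⟨key, fun hne => ?_⟩
  refine csSup_le_csSup ⟨⌈η * N⌉₊, fun k hk => ?_⟩ hne (fun k hk => key k hk)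
  simp only [Set.mem_setOf_eq] at hk
  have hAmh : 0 ≤ (m : ℝ) * H * A := by positivity
  have hkle : (k : ℝ) ≤ η * N := by
    have h1 : (k : ℝ) / N ≤ η := by linarith
    calc (k : ℝ) = (k : ℝ) / N * N := by field_simp
      _ ≤ η * N := by nlinarith
  calc k ≤ ⌈(k : ℝ)⌉₊ := by simp
    _ ≤ ⌈η * N⌉₊ := Nat.ceil_le_ceil hkle
end
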